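/- arXiv:2402.03118 — 3 statements merged into one kernel-verified Lean document; each statement's English description precedes it below -/
import Mathlib

section
/- Let I be a finite nonempty set and R : I → ℝ a function whose values are pairwise distinct. Suppose Rmin : ℝ and w : I → {0,1} satisfy: (i) Rmin ≤ R i for all i ∈ I; (ii) R i - M·(1 - w i) ≤ Rmin for all i ∈ I, where M > max_i R i - min_i R i; and (iii) there exists at least one i with w i = 1. Then there is exactly one i with w i = 1, and for that i, R i = Rmin = min over I of R. -/
theorem choice_selection_correct {ι : Type*} [Fintype ι] [Nonempty ι]
    (R : ι → ℝ) (hR : Function.Injective R)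
    (Rmin M : ℝ) (w : ι → ℝ) (hw : ∀ i, w i = 0 ∨ w i = 1)
    (hM : M > Finset.univ.sup' Finset.univ_nonempty R -
          Finset.univ.inf' Finset.univ_nonempty R)
    (hlb : ∀ i, Rmin ≤ R i)
    (hub : ∀ i, R i - M * (1 - w i) ≤ Rmin)
    (hex : ∃ i, w i = 1) :
    (∃! i, w i = 1) ∧
      ∀ i, w i = 1 → R i = Rmin ∧
        Rmin = Finset.univ.inf' Finset.univ_nonempty R := by
  have key : ∀ i, w i = 1 → R i = Rmin := by
    intro i hi
    have := hub i
    rw [hi] at this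
    simp at this
    exact le_antisymm this (hlb i)
  obtain ⟨i0, hi0⟩ := hex
  refine ⟨⟨i0, hi0, fun j hj => hR (by rw [key j hj, key i0 hi0])⟩, ?_⟩
  intro i hi
  refine ⟨key i hi, le_antisymm (Finset.le_inf' _ _ fun j _ => hlb j) ?_⟩
  calc Finset.univ.inf' Finset.univ_nonempty R ≤ R i :=
        Finset.inf'_le _ (Finset.mem_univ i)
    _ = Rmin := key i hi
end

section
/- Let N be the number of customers, and for a fixed alternative i with capacity c ≥ 1, let w : {1,…,N} → {0,1} (purchase indicators) and y : {1,…,N} → {0,1} (availability indicators) satisfy: (a) y(n+1) ≤ y(n) for all n < N; (b) for all n > c, Σ_{m=1}^{n-1} w(m) ≤ (c-1)·y(n) + (N-1)·(1 - y(n)); (c) for all n, c·(1 - y(n)) ≤ Σ_{m=1}^{n-1} w(m); (d) w(n) ≤ y(n) for all n. Then Σ_{n=1}^{N} w(n) ≤ c. -/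
theorem capacity_respected (N c : ℕ) (hc : 1 ≤ c)
    (w y : ℕ → ℝ)
    (hw : ∀ n, w n = 0 ∨ w n = 1) (hy : ∀ n, y n = 0 ∨ y n = 1)
    (ha : ∀ n, 1 ≤ n → n < N → y (n + 1) ≤ y n)
    (hb : ∀ n, c < n → n ≤ N →
      ∑ m ∈ Finset.Icc 1 (n - 1), w m ≤
        ((c : ℝ) - 1) * y n + ((N : ℝ) - 1) * (1 - y n))
    (hcc : ∀ n, 1 ≤ n → n ≤ N →
      (c : ℝ) * (1 - y n) ≤ ∑ m ∈ Finset.Icc 1 (n - 1), w m)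
    (hd : ∀ n, w n ≤ y n) :
    ∑ n ∈ Finset.Icc 1 N, w n ≤ (c : ℝ) := by
  have hw0 : ∀ n, 0 ≤ w n := fun n => by rcases hw n with h | h <;> simp [h]
  have hw1 : ∀ n, w n ≤ 1 := fun n => by rcases hw n with h | h <;> simp [h]
  -- monotonicity of y on [1, N]
  have hmono : ∀ m n : ℕ, 1 ≤ m → m ≤ n → n ≤ N → y n ≤ y m := by
    intro m n hm hmn hnN
    induction n, hmn using Nat.le_induction with
    | base => exact le_rfl
    | succ k hk ih =>
      have h1 : 1 ≤ k := le_trans hm hk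
      have h2 : k < N := Nat.lt_of_succ_le hnN
      exact le_trans (ha k h1 h2) (ih (le_of_lt h2))
  by_cases hNc : N ≤ c
  · calc ∑ n ∈ Finset.Icc 1 N, w n ≤ ∑ n ∈ Finset.Icc 1 N, (1 : ℝ) :=
          Finset.sum_le_sum fun n _ => hw1 n
      _ = N := by simp
      _ ≤ c := by exact_mod_cast hNc
  · push_neg at hNc
    by_cases hex : ∃ k, (1 ≤ k ∧ k ≤ N) ∧ y k = 0
    · -- minimal zero
      classical
      set k := Nat.find hex with hkdef
      obtain ⟨⟨hk1, hkN⟩, hyk⟩ := Nat.find_spec hex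
      have hmin : ∀ m, m < k → ¬((1 ≤ m ∧ m ≤ N) ∧ y m = 0) := fun m hm => Nat.find_min hex hm
      -- w n = 0 for k ≤ n ≤ N
      have hwzero : ∀ n, k ≤ n → n ≤ N → w n = 0 := by
        intro n hkn hnN
        have : y n ≤ y k := hmono k n hk1 hkn hnN
        have h0 : w n ≤ 0 := le_trans (hd n) (by rw [hyk] at this; exact this)
        exact le_antisymm h0 (hw0 n)
      have hy1 : ∀ m, 1 ≤ m → m < k → y m = 1 := by
        intro m hm1 hmk
        rcases hy m with h | h
        · exact absurd ⟨⟨hm1, le_trans (le_of_lt hmk) hkN⟩, h⟩ (hmin m hmk)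
        · exact h
      have hsplit : ∑ n ∈ Finset.Icc 1 N, w n = ∑ n ∈ Finset.Icc 1 (k-1), w n := by
        have h1 : (0:ℕ) ≤ k - 1 := Nat.zero_le _
        have h2 : k - 1 ≤ N := le_trans (Nat.sub_le _ _) hkN
        have := Finset.sum_Ioc_consecutive w h1 h2
        simp only [← Finset.Icc_add_one_left_eq_Ioc] at this
        simp only [Nat.succ_eq_add_one, Nat.zero_add] at this
        rw [← this, Nat.sub_add_cancel hk1]
        have : ∑ n ∈ Finset.Icc k N, w n = 0 :=
          Finset.sum_eq_zero fun n hn => by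
            rw [Finset.mem_Icc] at hn; exact hwzero n hn.1 hn.2
        rw [this, add_zero]
      rw [hsplit]
      by_cases hkc : k ≤ c + 1
      · calc ∑ n ∈ Finset.Icc 1 (k-1), w n ≤ ∑ n ∈ Finset.Icc 1 (k-1), (1:ℝ) :=
              Finset.sum_le_sum fun n _ => hw1 n
          _ = (k - 1 : ℕ) := by simp
          _ ≤ c := by exact_mod_cast Nat.sub_le_of_le_add hkc
      · push_neg at hkc
        have hk2 : c + 1 < k := hkc
        have hkm1 : c < k - 1 := by omega
        have hkm1N : k - 1 ≤ N := le_trans (Nat.sub_le _ _) hkN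
        have hy' : y (k-1) = 1 := hy1 (k-1) (by omega) (by omega)
        have hb' := hb (k-1) hkm1 hkm1N
        rw [hy'] at hb'
        simp only [sub_self, mul_zero, mul_one, add_zero] at hb'
        have hstep : ∑ n ∈ Finset.Icc 1 (k-1), w n
            = (∑ n ∈ Finset.Icc 1 (k-1-1), w n) + w (k-1) := by
          have : k - 1 = (k - 1 - 1) + 1 := by omega
          rw [this, Finset.sum_Icc_succ_top (by omega), ← this]
        rw [hstep]
        have := hw1 (k-1)
        linarith
    · -- y n = 1 on [1,N]
      push_neg at hex
      have hyN : y N = 1 := by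
        rcases hy N with h | h
        · exact absurd h (hex N ⟨by omega, le_refl N⟩)
        · exact h
      have hb' := hb N hNc le_rfl
      rw [hyN] at hb'
      simp only [sub_self, mul_zero, mul_one, add_zero] at hb'
      have hstep : ∑ n ∈ Finset.Icc 1 N, w n
          = (∑ n ∈ Finset.Icc 1 (N-1), w n) + w N := by
        have : N = (N - 1) + 1 := by omega
        rw [this, Finset.sum_Icc_succ_top (by omega), ← this]
      rw [hstep]
      have := hw1 N
      linarith
end

section
/- Let I be finite, R : I → ℝ, y : I → {0,1} with at least one available alternative (∃ i, y i = 1), w : I → {0,1} with w i ≤ y i, M > max_i R i - min_i R i, and suppose Rmin ≤ R i + M·(1 - y i) for all i, R i - M·(1 - w i) ≤ Rmin for all i, and Σ_i w i ≥ 1, with R pairwise distinct on {i : y i = 1}. Then the unique i with w i = 1 satisfies R i = min over { j : y j = 1 } of R j. -/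
theorem capacitated_choice_correct {ι : Type*} [Fintype ι] [Nonempty ι]
    (R : ι → ℝ) (y w : ι → ℝ) (Rmin M : ℝ)
    (hy : ∀ i, y i = 0 ∨ y i = 1) (hw : ∀ i, w i = 0 ∨ w i = 1)
    (havail : ∃ i, y i = 1)
    (hwy : ∀ i, w i ≤ y i)
    (hM : M > Finset.univ.sup' Finset.univ_nonempty R -
          Finset.univ.inf' Finset.univ_nonempty R)
    (hlb : ∀ i, Rmin ≤ R i + M * (1 - y i))
    (hub : ∀ i, R i - M * (1 - w i) ≤ Rmin)
    (hsum : 1 ≤ ∑ i, w i)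
    (hinj : Set.InjOn R {i | y i = 1}) :
    (∃! i, w i = 1) ∧ ∀ i, w i = 1 → ∀ j, y j = 1 → R i ≤ R j := by
  have hex : ∃ i, w i = 1 := by
    by_contra h
    push_neg at h
    have hz : ∀ i, w i = 0 := fun i => (hw i).resolve_right (h i)
    simp [hz] at hsum
    linarith
  obtain ⟨i0, hi0⟩ := hex
  have hy1 : ∀ i, w i = 1 → y i = 1 := by
    intro i hi
    rcases hy i with h | h
    · have := hwy i; rw [hi, h] at this; linarith
    · exact h
  have hRmin : ∀ i, w i = 1 → R i ≤ Rmin := by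
    intro i hi
    have := hub i; rw [hi] at this; simpa using this
  have hmin : ∀ i, w i = 1 → ∀ j, y j = 1 → R i ≤ R j := by
    intro i hi j hj
    have h1 := hlb j; rw [hj] at h1; simp at h1
    linarith [hRmin i hi]
  refine ⟨⟨i0, hi0, ?_⟩, hmin⟩
  intro j hj
  have h1 : R i0 ≤ R j := hmin i0 hi0 j (hy1 j hj)
  have h2 : R j ≤ R i0 := hmin j hj i0 (hy1 i0 hi0)
  exact hinj (hy1 j hj) (hy1 i0 hi0) (le_antisymm h2 h1)
end
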